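/- For every ε > 0 there exists a measurable set Ω ⊆ ℂ ≅ ℝ² with infinite Lebesgue measure such that for every f ∈ L²(ℝ), ∫_Ω |⟨f, π(z)h₀⟩|² dA(z) ≤ ε · ‖f‖₂². (Equivalently, the localization operator H_Ω with Gaussian window satisfies ‖H_Ω‖ ≤ ε even though |Ω| = ∞.) -/

import Mathlib

open MeasureTheory

/-- The Gabor transform with Gaussian window `h₀(t) = 2^{1/4} e^{−πt²}`:
`V f(x + iω) = ⟨f, π(x+iω)h₀⟩ = ∫_ℝ f(t) e^{−2πiωt} h₀(t − x) dt`. -/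
noncomputable def gaborTransform (f : ℝ → ℂ) (z : ℂ) : ℂ :=
  ∫ t : ℝ,
    f t * Complex.exp (-(2 * Real.pi * Complex.I * z.im * t)) *
      (((2 : ℝ) ^ ((1 : ℝ) / 4) * Real.exp (-Real.pi * (t - z.re) ^ 2) : ℝ) : ℂ)

/-!
Take for `Ω` the horizontal strip `ℝ × [0, M]`, which has infinite area. Since
`|V f(x + iω)| ≤ ∫ |f(t)| h₀(t - x) dt` does not depend on `ω`, Cauchy–Schwarz against the weight
`h₀(· - x)` gives `|V f(x + iω)|² ≤ ‖h₀‖₁ ∫ |f(t)|² h₀(t - x) dt`, and Tonelli over the strip gives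
`∫_Ω |V f|² ≤ M ‖h₀‖₁² ‖f‖₂² = M √2 ‖f‖₂²`. Hence `M = ε / √2` works.
-/

open scoped ENNReal

section General

variable {α E : Type*} [MeasurableSpace α] {μ : Measure α}

theorem ENNReal.sq_lintegral_mul_le {g w : α → ℝ≥0∞} (hg : AEMeasurable g μ)
    (hw : AEMeasurable w μ) :
    (∫⁻ a, g a * w a ∂μ) ^ 2 ≤ (∫⁻ a, g a ^ 2 * w a ∂μ) * ∫⁻ a, w a ∂μ := by
  have hsqrt : AEMeasurable (fun a => w a ^ (2⁻¹ : ℝ)) μ := hw.pow_const _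
  have hsq : ∀ a, (w a ^ (2⁻¹ : ℝ)) ^ (2 : ℝ) = w a := fun a => by
    rw [← ENNReal.rpow_mul]; norm_num
  have holder := ENNReal.lintegral_mul_le_Lp_mul_Lq μ Real.HolderConjugate.two_two
    (hg.mul hsqrt) hsqrt
  simp only [Pi.mul_apply, mul_assoc, ← sq, ← ENNReal.rpow_two,
    ENNReal.mul_rpow_of_nonneg _ _ zero_le_two, hsq] at holder
  calc (∫⁻ a, g a * w a ∂μ) ^ 2
      ≤ ((∫⁻ a, g a ^ 2 * w a ∂μ) ^ (1 / 2 : ℝ) * (∫⁻ a, w a ∂μ) ^ (1 / 2 : ℝ)) ^ 2 :=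
        pow_le_pow_left' holder 2
    _ = (∫⁻ a, g a ^ 2 * w a ∂μ) * ∫⁻ a, w a ∂μ := by
        rw [mul_pow, ← ENNReal.rpow_natCast, ← ENNReal.rpow_natCast, ← ENNReal.rpow_mul,
          ← ENNReal.rpow_mul]
        norm_num

variable [NormedAddCommGroup E]

theorem MeasureTheory.MemLp.ofReal_integral_norm_sq {f : α → E} (hf : MemLp f 2 μ) :
    ENNReal.ofReal (∫ a, ‖f a‖ ^ 2 ∂μ) = ∫⁻ a, ‖f a‖ₑ ^ 2 ∂μ := by
  simpa only [norm_pow, norm_norm, enorm_pow, enorm_norm] using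
    ofReal_integral_norm_eq_lintegral_enorm hf.norm.integrable_sq

theorem integral_norm_sq_le_of_lintegral_enorm_sq_le {F : α → E} {c : ℝ} (hc : 0 ≤ c)
    (h : ∫⁻ a, ‖F a‖ₑ ^ 2 ∂μ ≤ ENNReal.ofReal c) : ∫ a, ‖F a‖ ^ 2 ∂μ ≤ c := by
  rw [← ENNReal.ofReal_le_ofReal_iff hc]
  calc ENNReal.ofReal (∫ a, ‖F a‖ ^ 2 ∂μ) ≤ ‖∫ a, ‖F a‖ ^ 2 ∂μ‖ₑ := by
        rw [Real.enorm_eq_ofReal_abs]; exact ENNReal.ofReal_le_ofReal (le_abs_self _)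
    _ ≤ ∫⁻ a, ‖F a‖ₑ ^ 2 ∂μ := (enorm_integral_le_lintegral_enorm _).trans_eq
        (lintegral_congr fun a => by rw [enorm_pow, enorm_norm])
    _ ≤ ENNReal.ofReal c := h

end General

theorem lintegral_lintegral_mul_comp_sub {g w : ℝ → ℝ≥0∞} (hg : AEMeasurable g)
    (hw : Measurable w) :
    ∫⁻ x, ∫⁻ t, g t * w (t - x) = (∫⁻ t, w t) * ∫⁻ t, g t := by
  have hinner : ∀ t, ∫⁻ x, g t * w (t - x) = g t * ∫⁻ x, w x := fun t => by
    rw [lintegral_const_mul _ (by fun_prop), lintegral_sub_left_eq_self]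
  rw [lintegral_lintegral_swap ((hg.comp_snd).mul
    (hw.comp (measurable_snd.sub measurable_fst)).aemeasurable), lintegral_congr hinner,
    lintegral_mul_const'' _ hg, mul_comm]

namespace Complex

theorem setLIntegral_preimage_im_comp_re {s : Set ℝ} (hs : MeasurableSet s)
    {φ : ℝ → ℝ≥0∞} (hφ : AEMeasurable φ) :
    ∫⁻ z in im ⁻¹' s, φ z.re = volume s * ∫⁻ x, φ x := by
  have hind : ∀ z : ℂ, (im ⁻¹' s).indicator (fun z => φ z.re) z =
      φ z.re * s.indicator 1 z.im := fun z => by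
    by_cases hz : z.im ∈ s <;> simp [hz]
  rw [← lintegral_indicator (measurable_im hs), funext hind]
  refine (volume_preserving_equiv_real_prod.lintegral_comp_emb
      measurableEquivRealProd.measurableEmbedding
      (fun p : ℝ × ℝ => φ p.1 * s.indicator 1 p.2)).trans ?_
  rw [Measure.volume_eq_prod, lintegral_prod_mul (g := s.indicator 1) hφ
    (aemeasurable_one.indicator hs), lintegral_indicator_one hs, mul_comm]

theorem volume_preimage_im {s : Set ℝ} (hs : MeasurableSet s) :
    volume (im ⁻¹' s) = volume s * ∞ := by
  simpa using setLIntegral_preimage_im_comp_re hs (φ := fun _ => 1) aemeasurable_const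

theorem setLIntegral_preimage_im_sq_lintegral_mul_comp_sub_le {s : Set ℝ}
    (hs : MeasurableSet s) {g w : ℝ → ℝ≥0∞} (hg : AEMeasurable g) (hw : Measurable w) :
    ∫⁻ z in im ⁻¹' s, (∫⁻ t, g t * w (t - z.re)) ^ 2 ≤
      volume s * (∫⁻ t, w t) ^ 2 * ∫⁻ t, g t ^ 2 := by
  have hwx : ∀ x, AEMeasurable (fun t => w (t - x)) :=
    fun x => (hw.comp (by fun_prop)).aemeasurable
  have hφ : AEMeasurable fun x => ∫⁻ t, g t ^ 2 * w (t - x) :=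
    ((hg.pow_const 2).comp_snd.mul
      (hw.comp (measurable_snd.sub measurable_fst)).aemeasurable).lintegral_prod_right'
  calc ∫⁻ z in im ⁻¹' s, (∫⁻ t, g t * w (t - z.re)) ^ 2
      ≤ ∫⁻ z in im ⁻¹' s, (∫⁻ t, g t ^ 2 * w (t - z.re)) * ∫⁻ t, w t :=
        lintegral_mono fun z => by
          simpa only [lintegral_sub_right_eq_self] using
            ENNReal.sq_lintegral_mul_le hg (hwx z.re)
    _ = volume s * ∫⁻ x, (∫⁻ t, g t ^ 2 * w (t - x)) * ∫⁻ t, w t :=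
        setLIntegral_preimage_im_comp_re hs (hφ.mul_const _)
    _ = volume s * (∫⁻ t, w t) ^ 2 * ∫⁻ t, g t ^ 2 := by
        rw [lintegral_mul_const'' _ hφ, lintegral_lintegral_mul_comp_sub (hg.pow_const 2) hw]
        ring

end Complex

noncomputable def gaussianWindow (t : ℝ) : ℝ :=
  (2 : ℝ) ^ ((1 : ℝ) / 4) * Real.exp (-Real.pi * t ^ 2)

theorem gaussianWindow_nonneg (t : ℝ) : 0 ≤ gaussianWindow t := by
  unfold gaussianWindow; positivity

theorem integrable_gaussianWindow : Integrable gaussianWindow :=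
  (integrable_exp_neg_mul_sq Real.pi_pos).const_mul _

theorem integral_gaussianWindow : ∫ t, gaussianWindow t = (2 : ℝ) ^ ((1 : ℝ) / 4) := by
  simp only [gaussianWindow]
  rw [integral_const_mul, integral_gaussian, div_self Real.pi_pos.ne', Real.sqrt_one, mul_one]

theorem lintegral_ofReal_gaussianWindow :
    ∫⁻ t, ENNReal.ofReal (gaussianWindow t) = ENNReal.ofReal ((2 : ℝ) ^ ((1 : ℝ) / 4)) := by
  rw [← integral_gaussianWindow, ofReal_integral_eq_lintegral_ofReal integrable_gaussianWindow
    (Filter.Eventually.of_forall gaussianWindow_nonneg)]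

theorem enorm_gaborTransform_le (f : ℝ → ℂ) (z : ℂ) :
    ‖gaborTransform f z‖ₑ ≤ ∫⁻ t, ‖f t‖ₑ * ENNReal.ofReal (gaussianWindow (t - z.re)) := by
  refine (enorm_integral_le_lintegral_enorm _).trans_eq (lintegral_congr fun t => ?_)
  have hmod : ‖Complex.exp (-(2 * Real.pi * Complex.I * z.im * t))‖ₑ = 1 := by
    rw [show -(2 * Real.pi * Complex.I * z.im * t) =
        ((-(2 * Real.pi * z.im * t) : ℝ) : ℂ) * Complex.I by push_cast; ring,
      Complex.enorm_exp_ofReal_mul_I]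
  have hwin : ‖((gaussianWindow (t - z.re) : ℝ) : ℂ)‖ₑ =
      ENNReal.ofReal (gaussianWindow (t - z.re)) := by
    rw [← ofReal_norm, Complex.norm_real, Real.norm_of_nonneg (gaussianWindow_nonneg _)]
  rw [enorm_mul, enorm_mul, hmod, mul_one]
  exact congrArg (‖f t‖ₑ * ·) hwin

theorem setLIntegral_preimage_im_enorm_gaborTransform_sq_le {s : Set ℝ} (hs : MeasurableSet s)
    {f : ℝ → ℂ} (hf : AEStronglyMeasurable f) :
    ∫⁻ z in Complex.im ⁻¹' s, ‖gaborTransform f z‖ₑ ^ 2 ≤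
      volume s * ENNReal.ofReal (Real.sqrt 2) * ∫⁻ t, ‖f t‖ₑ ^ 2 := by
  have hnorm : ENNReal.ofReal ((2 : ℝ) ^ ((1 : ℝ) / 4)) ^ 2 = ENNReal.ofReal (Real.sqrt 2) := by
    rw [← ENNReal.ofReal_pow (by positivity), ← Real.rpow_natCast, ← Real.rpow_mul zero_le_two,
      Real.sqrt_eq_rpow]
    norm_num
  calc ∫⁻ z in Complex.im ⁻¹' s, ‖gaborTransform f z‖ₑ ^ 2
      ≤ ∫⁻ z in Complex.im ⁻¹' s,
          (∫⁻ t, ‖f t‖ₑ * ENNReal.ofReal (gaussianWindow (t - z.re))) ^ 2 :=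
        lintegral_mono fun z => pow_le_pow_left' (enorm_gaborTransform_le f z) 2
    _ ≤ volume s * (∫⁻ t, ENNReal.ofReal (gaussianWindow t)) ^ 2 * ∫⁻ t, ‖f t‖ₑ ^ 2 :=
        Complex.setLIntegral_preimage_im_sq_lintegral_mul_comp_sub_le hs hf.enorm
          (by unfold gaussianWindow; fun_prop)
    _ = volume s * ENNReal.ofReal (Real.sqrt 2) * ∫⁻ t, ‖f t‖ₑ ^ 2 := by
        rw [lintegral_ofReal_gaussianWindow, hnorm]

/-- For every `ε > 0` there is a measurable `Ω ⊆ ℂ` of infinite Lebesgue measure with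
`∫_Ω |⟨f, π(z)h₀⟩|² dA(z) ≤ ε ‖f‖₂²` for every `f ∈ L²(ℝ)`; i.e. the localization
operator `H_Ω` with Gaussian window satisfies `‖H_Ω‖ ≤ ε` although `|Ω| = ∞`. -/
theorem exists_infinite_measure_set_small_localization :
    ∀ ε : ℝ, 0 < ε → ∃ Ω : Set ℂ, MeasurableSet Ω ∧ volume Ω = ⊤ ∧
      ∀ f : ℝ → ℂ, MemLp f 2 volume →
        ∫ z in Ω, ‖gaborTransform f z‖ ^ 2 ≤ ε * ∫ t : ℝ, ‖f t‖ ^ 2 := by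
  intro ε hε
  have hM : 0 < ε / Real.sqrt 2 := by positivity
  refine ⟨Complex.im ⁻¹' Set.Icc 0 (ε / Real.sqrt 2), Complex.measurable_im measurableSet_Icc,
    ?_, fun f hf => ?_⟩
  · rw [Complex.volume_preimage_im measurableSet_Icc, Real.volume_Icc, sub_zero]
    exact ENNReal.mul_top (ENNReal.ofReal_pos.2 hM).ne'
  · refine integral_norm_sq_le_of_lintegral_enorm_sq_le
      (mul_nonneg hε.le (integral_nonneg fun t => sq_nonneg _)) ?_
    calc ∫⁻ z in Complex.im ⁻¹' Set.Icc 0 (ε / Real.sqrt 2), ‖gaborTransform f z‖ₑ ^ 2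
        ≤ ENNReal.ofReal (ε / Real.sqrt 2) * ENNReal.ofReal (Real.sqrt 2) *
            ENNReal.ofReal (∫ t, ‖f t‖ ^ 2) := by
          simpa only [Real.volume_Icc, sub_zero, hf.ofReal_integral_norm_sq] using
            setLIntegral_preimage_im_enorm_gaborTransform_sq_le (measurableSet_Icc (a := 0)
              (b := ε / Real.sqrt 2)) hf.aestronglyMeasurable
      _ = ENNReal.ofReal (ε * ∫ t, ‖f t‖ ^ 2) := by
          rw [← ENNReal.ofReal_mul hM.le, div_mul_cancel₀ _ (by positivity), ENNReal.ofReal_mul hε.le]
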